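/- arXiv:2401.04286 — 4 statements merged into one kernel-verified Lean document; each statement's English description precedes it below -/
import Mathlib

section
/- Let (A, 𝒜) be a measurable space and B a compact metrizable topological space. If m : A × B → ℝ is measurable in the first argument and continuous in the second argument, then there exists a Borel measurable map f̂ : A → B such that for all a ∈ A, m(a, f̂(a)) = sup_{b ∈ B} m(a, b). -/
/-!
Subtracting the value function `a ↦ ⨆ b, m a b`, which is measurable because the supremum
may be taken over a countable dense set, it suffices to find a measurable zero of a
Carathéodory function `u ≤ 0` whose maximum in `b` is `0`. Embed `B` into `ℕ → ℝ` by
continuous functions `e k` and shrink the zero set lexicographically: `K 0 a` is the zero set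
of `u a` and `K (k + 1) a` is the set of minimisers of `e k` on `K k a`. The minimum value
`E k a` is measurable in `a`, since `E k a ≤ c` iff `u a` attains `0` on the closed set
`{e k ≤ c}`, again a countable-supremum condition. Any point `f a` of the nested compact sets
`K k a` has coordinates `e k (f a) = E k a`, so `f` is measurable.
-/

open MeasureTheory Set Topology TopologicalSpace

section Caratheodory

variable {A B : Type*} [MeasurableSpace A] [TopologicalSpace B]

structure IsCaratheodory (u : A → B → ℝ) : Prop where
  measurable : ∀ b, Measurable fun a => u a b
  continuous : ∀ a, Continuous (u a)

structure IsNormalizedCaratheodory (u : A → B → ℝ) : Prop extends IsCaratheodory u where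
  isGreatest_zero : ∀ a, IsGreatest (range (u a)) 0

variable {u : A → B → ℝ}

theorem IsCaratheodory.restrict (hu : IsCaratheodory u) (F : Set B) :
    IsCaratheodory fun a (b : F) => u a b :=
  ⟨fun b => hu.measurable b, fun a => (hu.continuous a).comp continuous_subtype_val⟩

theorem IsCaratheodory.measurable_iSup [SeparableSpace B] (hu : IsCaratheodory u) :
    Measurable fun a => ⨆ b, u a b := by
  obtain ⟨S, hS, hSd⟩ := exists_countable_dense B
  have := hS.to_subtype
  simp_rw [← hSd.ciSup' (hu.continuous _)]
  exact Measurable.iSup fun s => hu.measurable s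

theorem IsCaratheodory.sub_iSup [CompactSpace B] [SeparableSpace B] [Nonempty B]
    (hu : IsCaratheodory u) : IsNormalizedCaratheodory fun a b => u a b - ⨆ b, u a b where
  measurable b := (hu.measurable b).sub hu.measurable_iSup
  continuous a := (hu.continuous a).sub continuous_const
  isGreatest_zero a := by
    refine ⟨?_, ?_⟩
    · obtain ⟨b, hb⟩ := (isCompact_range (hu.continuous a)).sSup_mem (range_nonempty _)
      exact ⟨b, sub_eq_zero.mpr hb⟩
    · rintro _ ⟨b, rfl⟩
      exact sub_nonpos.mpr (le_ciSup (isCompact_range (hu.continuous a)).bddAbove b)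

theorem IsCaratheodory.measurableSet_exists_nonneg [CompactSpace B] [SeparableSpace B]
    (hu : IsCaratheodory u) : MeasurableSet {a | ∃ b, 0 ≤ u a b} := by
  cases isEmpty_or_nonempty B
  · simp
  have hmax : ∀ a, ∃ b, u a b = ⨆ b, u a b := fun a =>
    (isCompact_range (hu.continuous a)).sSup_mem (range_nonempty _)
  have : {a | ∃ b, 0 ≤ u a b} = {a | 0 ≤ ⨆ b, u a b} := by
    ext a
    obtain ⟨b₀, hb₀⟩ := hmax a
    refine ⟨fun ⟨b, hb⟩ => hb.trans ?_, fun h => ⟨b₀, hb₀ ▸ h⟩⟩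
    exact le_ciSup (isCompact_range (hu.continuous a)).bddAbove b
  rw [this]
  exact measurableSet_le measurable_const hu.measurable_iSup

theorem IsCaratheodory.measurableSet_exists_mem_nonneg [CompactSpace B]
    [SecondCountableTopology B] (hu : IsCaratheodory u) {F : Set B} (hF : IsClosed F) :
    MeasurableSet {a | ∃ b ∈ F, 0 ≤ u a b} := by
  have := isCompact_iff_compactSpace.mp hF.isCompact
  simpa using (hu.restrict F).measurableSet_exists_nonneg

end Caratheodory

section ZeroSetInf

variable {A B : Type*} [TopologicalSpace B] [CompactSpace B] {u : A → B → ℝ} {e : B → ℝ}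

noncomputable def zeroSetInf (u : A → B → ℝ) (e : B → ℝ) (a : A) : ℝ :=
  sInf (e '' {b | u a b = 0})

theorem zeroSetInf_le (he : Continuous e) {a : A} {b : B} (hb : u a b = 0) :
    zeroSetInf u e a ≤ e b :=
  csInf_le ((isCompact_range he).bddBelow.mono (image_subset_range _ _)) ⟨b, hb, rfl⟩

theorem exists_zeroSetInf_eq (hu : ∀ a, Continuous (u a)) (hzero : ∀ a, ∃ b, u a b = 0)
    (he : Continuous e) (a : A) : ∃ b, u a b = 0 ∧ e b = zeroSetInf u e a :=
  ((isClosed_eq (hu a) continuous_const).isCompact.image he).sInf_mem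
    (Set.Nonempty.image e (hzero a))

theorem zeroSetInf_le_iff (hu : ∀ a, Continuous (u a)) (hzero : ∀ a, ∃ b, u a b = 0)
    (he : Continuous e) {a : A} {c : ℝ} :
    zeroSetInf u e a ≤ c ↔ ∃ b, e b ≤ c ∧ u a b = 0 := by
  refine ⟨fun h => ?_, fun ⟨b, hbc, hb⟩ => (zeroSetInf_le he hb).trans hbc⟩
  obtain ⟨b, hb, hbe⟩ := exists_zeroSetInf_eq hu hzero he a
  exact ⟨b, hbe ▸ h, hb⟩

/-- The zero set of `lexStep u e a` is the set of minimisers of `e` on the zero set of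
`u a`. -/
noncomputable def lexStep (u : A → B → ℝ) (e : B → ℝ) (a : A) (b : B) : ℝ :=
  min (u a b) (zeroSetInf u e a - e b)

theorem eq_zero_of_lexStep_eq_zero (hmax : ∀ a, IsGreatest (range (u a)) 0) (he : Continuous e)
    {a : A} {b : B} (h : lexStep u e a b = 0) : u a b = 0 ∧ e b = zeroSetInf u e a := by
  have hu : u a b = 0 := le_antisymm ((hmax a).2 ⟨b, rfl⟩) (h ▸ min_le_left _ _)
  have he' : e b ≤ zeroSetInf u e a := sub_nonneg.mp (h ▸ min_le_right _ _)
  exact ⟨hu, le_antisymm he' (zeroSetInf_le he hu)⟩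

end ZeroSetInf

noncomputable def lexSeq {A B : Type*} (u : A → B → ℝ) (e : ℕ → B → ℝ) :
    ℕ → A → B → ℝ
  | 0 => u
  | k + 1 => lexStep (lexSeq u e k) (e k)

section LexSeq

variable {A B : Type*} [MeasurableSpace A] [TopologicalSpace B] [CompactSpace B]
  [SecondCountableTopology B] {u : A → B → ℝ}

theorem IsNormalizedCaratheodory.measurable_zeroSetInf (hu : IsNormalizedCaratheodory u)
    {e : B → ℝ} (he : Continuous e) : Measurable (zeroSetInf u e) := by
  refine measurable_of_Iic fun c => ?_
  convert hu.measurableSet_exists_mem_nonneg (isClosed_le he continuous_const) using 1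
  ext a
  simp only [mem_preimage, mem_Iic,
    zeroSetInf_le_iff hu.continuous (fun a => (hu.isGreatest_zero a).1) he]
  exact exists_congr fun b => and_congr_right fun _ =>
    ⟨fun h => h.ge, fun h => le_antisymm ((hu.isGreatest_zero a).2 ⟨b, rfl⟩) h⟩

theorem IsNormalizedCaratheodory.lexStep (hu : IsNormalizedCaratheodory u) {e : B → ℝ}
    (he : Continuous e) : IsNormalizedCaratheodory (lexStep u e) where
  measurable b := (hu.measurable b).min ((hu.measurable_zeroSetInf he).sub_const _)
  continuous a := (hu.continuous a).min (continuous_const.sub he)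
  isGreatest_zero a := by
    refine ⟨?_, ?_⟩
    · obtain ⟨b, hb, hbe⟩ :=
        exists_zeroSetInf_eq hu.continuous (fun a => (hu.isGreatest_zero a).1) he a
      exact ⟨b, by simp [_root_.lexStep, hb, hbe]⟩
    · rintro _ ⟨b, rfl⟩
      exact (min_le_left _ _).trans ((hu.isGreatest_zero a).2 ⟨b, rfl⟩)

variable {e : ℕ → B → ℝ}

theorem isNormalizedCaratheodory_lexSeq (hu : IsNormalizedCaratheodory u)
    (he : ∀ k, Continuous (e k)) (k : ℕ) : IsNormalizedCaratheodory (lexSeq u e k) := by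
  induction k with
  | zero => exact hu
  | succ k ih => exact ih.lexStep (he k)

theorem exists_forall_lexSeq_eq_zero (hu : IsNormalizedCaratheodory u)
    (he : ∀ k, Continuous (e k)) (a : A) : ∃ b, ∀ k, lexSeq u e k a b = 0 := by
  have hseq := isNormalizedCaratheodory_lexSeq hu he
  have hclosed : ∀ k, IsClosed {b | lexSeq u e k a b = 0} := fun k =>
    isClosed_eq ((hseq k).continuous a) continuous_const
  have hanti : ∀ k, {b | lexSeq u e (k + 1) a b = 0} ⊆ {b | lexSeq u e k a b = 0} :=
    fun k _ hb => (eq_zero_of_lexStep_eq_zero (hseq k).isGreatest_zero (he k) hb).1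
  obtain ⟨b, hb⟩ := IsCompact.nonempty_iInter_of_sequence_nonempty_isCompact_isClosed
    (fun k => {b | lexSeq u e k a b = 0}) hanti
    (fun k => ((hseq k).isGreatest_zero a).1) (hclosed 0).isCompact hclosed
  exact ⟨b, fun k => mem_iInter.mp hb k⟩

theorem IsNormalizedCaratheodory.exists_measurable_eq_zero [MeasurableSpace B] [BorelSpace B]
    (hu : IsNormalizedCaratheodory u) (he : ∀ k, Continuous (e k))
    (hsep : Function.Injective fun b k => e k b) :
    ∃ f : A → B, Measurable f ∧ ∀ a, u a (f a) = 0 := by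
  have hseq := isNormalizedCaratheodory_lexSeq hu he
  choose f hf using exists_forall_lexSeq_eq_zero hu he
  have hfe : ∀ k a, e k (f a) = zeroSetInf (lexSeq u e k) (e k) a := fun k a =>
    (eq_zero_of_lexStep_eq_zero (hseq k).isGreatest_zero (he k) (hf a (k + 1))).2
  have hemb : IsClosedEmbedding fun b k => e k b := (continuous_pi he).isClosedEmbedding hsep
  refine ⟨f, hemb.measurableEmbedding.measurable_comp_iff.mp ?_, fun a => hf a 0⟩
  refine measurable_pi_lambda _ fun k => ?_
  simp only [Function.comp_apply, hfe k]
  exact (hseq k).measurable_zeroSetInf (he k)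

end LexSeq

/-- Measurable selection of a maximizer: if `m : A × B → ℝ` is measurable in the first
argument and continuous in the second, with `B` compact metrizable, then there is a
Borel measurable `f : A → B` with `m a (f a) = ⨆ b, m a b` for all `a`. -/
theorem stmt_0 {A B : Type*} [MeasurableSpace A]
    [TopologicalSpace B] [CompactSpace B] [TopologicalSpace.MetrizableSpace B]
    [Nonempty B] [MeasurableSpace B] [BorelSpace B]
    (m : A → B → ℝ)
    (hmeas : ∀ b : B, Measurable (fun a => m a b))
    (hcont : ∀ a : A, Continuous (m a)) :
    ∃ f : A → B, Measurable f ∧ ∀ a : A, m a (f a) = ⨆ b : B, m a b := by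
  have hu := IsCaratheodory.sub_iSup ⟨hmeas, hcont⟩
  obtain ⟨ι, hι⟩ := exists_embedding_l_infty B
  obtain ⟨f, hf, hfmax⟩ := hu.exists_measurable_eq_zero
    (fun k => (continuous_eval_const k).comp hι.continuous)
    (fun b b' h => hι.injective (BoundedContinuousFunction.ext (congrFun h)))
  exact ⟨f, hf, fun a => sub_eq_zero.mp (hfmax a)⟩
end

section
/- Let B be a nonempty compact subset of ℝ^ℕ (with the product topology). Then B has a maximum element in the lexicographic (dictionary) order: there exists b* ∈ B such that for every b ∈ B, b ≤_lex b*, where x ≤_lex y iff x = y or x_k < y_k at the first coordinate k where they differ. -/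
/-!
Maximise the coordinates one at a time: starting from `B`, keep at step `n` the points that
maximise the `n`-th coordinate among the survivors. Each stage is a nonempty compact set, so the
nested intersection contains some `b`. A point `x` of `B` that agrees with `b` before coordinate
`k` survives to stage `k`, where `b` maximises the `k`-th coordinate; hence `x ≤ b`
lexicographically.
-/

section LexSlices

variable {α : Type*}

section LE

variable [LE α]

def lexSlices (B : Set (ℕ → α)) : ℕ → Set (ℕ → α)
  | 0 => B
  | n + 1 => {x ∈ lexSlices B n | ∀ y ∈ lexSlices B n, y n ≤ x n}

variable {B : Set (ℕ → α)}

theorem lexSlices_succ_subset (n : ℕ) : lexSlices B (n + 1) ⊆ lexSlices B n :=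
  fun _ hx => hx.1

theorem mem_lexSlices_of_forall_lt_eq {b x : ℕ → α} (hb : b ∈ ⋂ n, lexSlices B n) (hx : x ∈ B)
    {k : ℕ} (hxb : ∀ j < k, x j = b j) : x ∈ lexSlices B k := by
  induction k with
  | zero => exact hx
  | succ m ih =>
    have hxm : x ∈ lexSlices B m := ih fun j hj => hxb j (hj.trans m.lt_succ_self)
    have hbm : b ∈ lexSlices B (m + 1) := Set.mem_iInter.mp hb (m + 1)
    refine ⟨hxm, fun y hy => ?_⟩
    rw [hxb m m.lt_succ_self]
    exact hbm.2 y hy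

end LE

variable [LinearOrder α] [TopologicalSpace α] [OrderClosedTopology α] {B : Set (ℕ → α)}

theorem isCompact_lexSlices (hB : IsCompact B) (n : ℕ) : IsCompact (lexSlices B n) := by
  induction n with
  | zero => exact hB
  | succ n ih =>
    have hclosed : IsClosed {x : ℕ → α | ∀ y ∈ lexSlices B n, y n ≤ x n} := by
      simp only [Set.ofPred_forall]
      exact isClosed_biInter fun y _ => isClosed_le continuous_const (continuous_apply n)
    exact ih.inter_right hclosed

theorem nonempty_lexSlices (hB : IsCompact B) (hne : B.Nonempty) (n : ℕ) :
    (lexSlices B n).Nonempty := by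
  induction n with
  | zero => exact hne
  | succ n ih =>
    obtain ⟨z, hz, hzmax⟩ :=
      (isCompact_lexSlices hB n).exists_isMaxOn ih (continuous_apply n).continuousOn
    exact ⟨z, hz, fun y hy => hzmax hy⟩

theorem IsCompact.exists_forall_toLex_le (hB : IsCompact B) (hne : B.Nonempty) :
    ∃ b ∈ B, ∀ x ∈ B, toLex x ≤ toLex b := by
  obtain ⟨b, hb⟩ := IsCompact.nonempty_iInter_of_sequence_nonempty_isCompact_isClosed _
    lexSlices_succ_subset (nonempty_lexSlices hB hne) (isCompact_lexSlices hB 0)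
    fun n => (isCompact_lexSlices hB n).isClosed
  refine ⟨b, Set.mem_iInter.mp hb 0, fun x hx => not_lt.mp ?_⟩
  rintro ⟨k, hbx, hlt⟩
  have hxk := mem_lexSlices_of_forall_lt_eq hb hx fun j hj => (hbx j hj).symm
  exact (Set.mem_iInter.mp hb (k + 1)).2 x hxk |>.not_gt hlt

end LexSlices

/-- A nonempty compact subset of `ℝ^ℕ` (product topology) has a maximum element in the
lexicographic order: there is `b ∈ B` such that every `x ∈ B` satisfies `x ≤_lex b`,
i.e. `x = b` or `x k < b k` at the first coordinate `k` where they differ. -/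
theorem stmt_1 (B : Set (ℕ → ℝ)) (hB : IsCompact B) (hne : B.Nonempty) :
    ∃ b ∈ B, ∀ x ∈ B, x = b ∨ ∃ k : ℕ, (∀ j < k, x j = b j) ∧ x k < b k := by
  obtain ⟨b, hb, hmax⟩ := hB.exists_forall_toLex_le hne
  exact ⟨b, hb, fun x hx => (hmax x hx).eq_or_lt⟩
end

section
/- Suppose (X,Y) on ℝ^d × {0,1} has regression function η satisfying the hard margin condition: there exists t₀ > 0 with |η(x) − 1/2| ≥ t₀ for μ_X-almost every x. Let f : ℝ^d → ℝ be measurable with plug-in classifier g_f. Then P(g_f(X) ≠ Y) − L* ≤ (2/t₀) ∫ |η − f|² dμ_X, where L* is the Bayes risk. -/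
open MeasureTheory

/-!
Since `Y ∈ {0, 1}`, the risk of the classifier `𝟙{X ∈ A}` is `∫ η + ∫_A (1 - 2η)` (integrals
against the law of `X`). Hence the excess risk of `g_f` is at most the integral of
`|1 - 2η| = 2|η - 1/2|` over the set where `g_f` and the Bayes classifier disagree.
There `η` and `f` lie on opposite sides of `1/2`, so `|η - 1/2| ≤ |η - f|`, and the margin
`t₀ ≤ |η - 1/2|` gives `2|η - 1/2| ≤ (2/t₀)|η - 1/2|² ≤ (2/t₀)|η - f|²`.
-/

open scoped symmDiff

lemma ENNReal.sub_le_ofReal_of_toReal_sub_le {a b : ENNReal} {c : ℝ} (ha : a ≠ ⊤) (hb : b ≠ ⊤)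
    (h : a.toReal - b.toReal ≤ c) : a - b ≤ ENNReal.ofReal c := by
  rw [tsub_le_iff_right]
  calc a = ENNReal.ofReal a.toReal := (ENNReal.ofReal_toReal ha).symm
    _ ≤ ENNReal.ofReal (c + b.toReal) := ENNReal.ofReal_le_ofReal (by linarith)
    _ ≤ ENNReal.ofReal c + ENNReal.ofReal b.toReal := ENNReal.ofReal_add_le
    _ = ENNReal.ofReal c + b := by rw [ENNReal.ofReal_toReal hb]

lemma abs_sub_le_abs_sub_of_xor {a b c : ℝ} (h : Xor (c ≤ b) (c ≤ a)) : |a - c| ≤ |a - b| := by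
  rcases h with ⟨hb, ha⟩ | ⟨ha, hb⟩
  · rw [abs_of_neg (by linarith), abs_of_neg (by linarith)]; linarith
  · rw [abs_of_nonneg (by linarith), abs_of_pos (by linarith)]; linarith

lemma abs_one_sub_two_mul_le_of_margin {a b t : ℝ} (ht : 0 < t) (hmargin : t ≤ |a - 1 / 2|)
    (hsep : Xor (1 / 2 ≤ b) (1 / 2 ≤ a)) : |1 - 2 * a| ≤ 2 / t * |a - b| ^ 2 := by
  have hclose := abs_sub_le_abs_sub_of_xor hsep
  have htwice : |1 - 2 * a| = 2 * |a - 1 / 2| := by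
    rw [show 1 - 2 * a = -(2 * (a - 1 / 2)) by ring, abs_neg, abs_mul, abs_two]
  rw [htwice, div_mul_eq_mul_div, le_div_iff₀ ht]
  nlinarith [mul_le_mul_of_nonneg_left hmargin (abs_nonneg (a - 1 / 2)),
    mul_self_le_mul_self (abs_nonneg (a - 1 / 2)) hclose]

lemma measureReal_symmDiff_eq_add_sub_two_mul {α : Type*} [MeasurableSpace α] {μ : Measure α}
    [IsFiniteMeasure μ] {s t : Set α} (hs : MeasurableSet s) (ht : MeasurableSet t) :
    μ.real (s ∆ t) = μ.real s + μ.real t - 2 * μ.real (s ∩ t) := by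
  have hs' := measureReal_inter_add_sdiff (μ := μ) (s := s) ht
  have ht' := measureReal_inter_add_sdiff (μ := μ) (s := t) hs
  rw [Set.inter_comm] at ht'
  rw [measureReal_symmDiff_eq hs ht]
  linarith

lemma setIntegral_sub_setIntegral_le {α : Type*} [MeasurableSpace α] {μ : Measure α}
    {h : α → ℝ} (hh : Integrable h μ) {A B : Set α} (hA : MeasurableSet A)
    (hB : MeasurableSet B) :
    ∫ x in A, h x ∂μ - ∫ x in B, h x ∂μ ≤ ∫ x in A ∆ B, |h x| ∂μ := by
  rw [← integral_indicator hA, ← integral_indicator hB, ← integral_indicator (hA.symmDiff hB),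
    ← integral_sub (hh.indicator hA) (hh.indicator hB)]
  refine integral_mono ((hh.indicator hA).sub (hh.indicator hB)) (hh.abs.indicator
    (hA.symmDiff hB)) fun x => ?_
  by_cases hxA : x ∈ A <;> by_cases hxB : x ∈ B <;>
    simp [Set.indicator, Set.mem_symmDiff, hxA, hxB, le_abs_self, neg_le_abs]

lemma setOf_plugIn_ne_eq_symmDiff {Ω α : Type*} {X : Ω → α} {Y : Ω → ℝ}
    (hY01 : ∀ ω, Y ω = 0 ∨ Y ω = 1) (g : α → ℝ) :
    {ω | (if (1 : ℝ) / 2 ≤ g (X ω) then (1 : ℝ) else 0) ≠ Y ω}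
      = (X ⁻¹' {x | 1 / 2 ≤ g x}) ∆ {ω | Y ω = 1} := by
  ext ω
  rcases hY01 ω with h | h <;> simp [Set.mem_symmDiff, h]

lemma ofReal_setIntegral_le_mul_lintegral {α : Type*} [MeasurableSpace α] {μ : Measure α}
    {h k : α → ℝ} {c : ℝ} {S : Set α} (hh : Integrable h μ) (h0 : ∀ x, 0 ≤ h x) (hc : 0 ≤ c)
    (hle : ∀ᵐ x ∂μ.restrict S, h x ≤ c * k x) :
    ENNReal.ofReal (∫ x in S, h x ∂μ) ≤ ENNReal.ofReal c * ∫⁻ x, ENNReal.ofReal (k x) ∂μ :=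
  calc ENNReal.ofReal (∫ x in S, h x ∂μ) = ∫⁻ x in S, ENNReal.ofReal (h x) ∂μ :=
        ofReal_integral_eq_lintegral_ofReal hh.integrableOn (ae_of_all _ h0)
    _ ≤ ∫⁻ x in S, ENNReal.ofReal c * ENNReal.ofReal (k x) ∂μ := by
        refine lintegral_mono_ae (hle.mono fun x hx => ?_)
        rw [← ENNReal.ofReal_mul hc]
        exact ENNReal.ofReal_le_ofReal hx
    _ = ENNReal.ofReal c * ∫⁻ x in S, ENNReal.ofReal (k x) ∂μ :=
        lintegral_const_mul' _ _ ENNReal.ofReal_ne_top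
    _ ≤ ENNReal.ofReal c * ∫⁻ x, ENNReal.ofReal (k x) ∂μ := by
        gcongr; exact Measure.restrict_le_self

section Risk

variable {Ω α : Type*} [MeasurableSpace Ω] [MeasurableSpace α] {P : Measure Ω}
  {X : Ω → α} {Y : Ω → ℝ} {η : α → ℝ}

lemma measureReal_preimage_inter_eq_one (hY : Measurable Y) (hY01 : ∀ ω, Y ω = 0 ∨ Y ω = 1)
    (hreg : ∀ s : Set α, MeasurableSet s → ∫ ω in X ⁻¹' s, Y ω ∂P = ∫ x in s, η x ∂(P.map X))
    {s : Set α} (hs : MeasurableSet s) :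
    P.real (X ⁻¹' s ∩ {ω | Y ω = 1}) = ∫ x in s, η x ∂(P.map X) := by
  have hE : MeasurableSet {ω | Y ω = 1} := hY (measurableSet_singleton 1)
  calc P.real (X ⁻¹' s ∩ {ω | Y ω = 1})
      = ∫ ω in X ⁻¹' s, {ω | Y ω = 1}.indicator (fun _ => (1 : ℝ)) ω ∂P := by
        rw [setIntegral_indicator hE, setIntegral_const, smul_eq_mul, mul_one]
    _ = ∫ ω in X ⁻¹' s, Y ω ∂P :=
        integral_congr_ae (ae_of_all _ fun ω => by rcases hY01 ω with h | h <;> simp [h])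
    _ = ∫ x in s, η x ∂(P.map X) := hreg s hs

lemma measureReal_plugIn_ne [IsFiniteMeasure P] (hX : Measurable X) (hY : Measurable Y)
    (hY01 : ∀ ω, Y ω = 0 ∨ Y ω = 1) (hη : Integrable η (P.map X))
    (hreg : ∀ s : Set α, MeasurableSet s → ∫ ω in X ⁻¹' s, Y ω ∂P = ∫ x in s, η x ∂(P.map X))
    {g : α → ℝ} (hg : Measurable g) :
    P.real {ω | (if (1 : ℝ) / 2 ≤ g (X ω) then (1 : ℝ) else 0) ≠ Y ω}
      = ∫ x, η x ∂(P.map X) + ∫ x in {x | 1 / 2 ≤ g x}, (1 - 2 * η x) ∂(P.map X) := by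
  have hA : MeasurableSet {x | (1 : ℝ) / 2 ≤ g x} := measurableSet_le measurable_const hg
  have hE : MeasurableSet {ω | Y ω = 1} := hY (measurableSet_singleton 1)
  have hinter := measureReal_preimage_inter_eq_one hY hY01 hreg hA
  have hall := measureReal_preimage_inter_eq_one hY hY01 hreg MeasurableSet.univ
  rw [Set.preimage_univ, Set.univ_inter, setIntegral_univ] at hall
  rw [setOf_plugIn_ne_eq_symmDiff hY01,
    measureReal_symmDiff_eq_add_sub_two_mul (hX hA) hE,
    integral_sub (integrable_const 1).integrableOn (hη.const_mul 2).integrableOn,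
    integral_const_mul, setIntegral_const, smul_eq_mul, mul_one, map_measureReal_apply hX hA]
  linarith

end Risk

/-- Hard margin bound: if `|η(x) − 1/2| ≥ t₀ > 0` for `μ_X`-a.e. `x`, then the excess
risk of the plug-in classifier `g_f` is at most `(2/t₀) ∫ |η − f|² dμ_X`. -/
theorem stmt_11 {d : ℕ} {Ω : Type*} [MeasurableSpace Ω] (P : Measure Ω)
    [IsProbabilityMeasure P]
    (X : Ω → (Fin d → ℝ)) (Y : Ω → ℝ) (hX : Measurable X) (hY : Measurable Y)
    (hY01 : ∀ ω, Y ω = 0 ∨ Y ω = 1)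
    (η : (Fin d → ℝ) → ℝ) (hη : Measurable η) (hη01 : ∀ x, 0 ≤ η x ∧ η x ≤ 1)
    (hreg : ∀ s : Set (Fin d → ℝ), MeasurableSet s →
      ∫ ω in X ⁻¹' s, Y ω ∂P = ∫ x in s, η x ∂(P.map X))
    (t₀ : ℝ) (ht₀ : 0 < t₀)
    (hmargin : ∀ᵐ x ∂(P.map X), t₀ ≤ |η x - 1 / 2|)
    (f : (Fin d → ℝ) → ℝ) (hf : Measurable f) :
    P {ω | (if (1 : ℝ) / 2 ≤ f (X ω) then (1 : ℝ) else 0) ≠ Y ω}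
        - P {ω | (if (1 : ℝ) / 2 ≤ η (X ω) then (1 : ℝ) else 0) ≠ Y ω}
      ≤ ENNReal.ofReal (2 / t₀) *
          ∫⁻ x, ENNReal.ofReal (|η x - f x| ^ 2) ∂(P.map X) := by
  set μ := P.map X
  have hA : MeasurableSet {x | (1 : ℝ) / 2 ≤ f x} := measurableSet_le measurable_const hf
  have hB : MeasurableSet {x | (1 : ℝ) / 2 ≤ η x} := measurableSet_le measurable_const hη
  set S := {x | (1 : ℝ) / 2 ≤ f x} ∆ {x | (1 : ℝ) / 2 ≤ η x}
  have hηint : Integrable η μ := Integrable.of_bound hη.aestronglyMeasurable 1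
    (ae_of_all _ fun x => by rw [Real.norm_eq_abs, abs_le]; constructor <;> linarith [hη01 x])
  have hh : Integrable (fun x => 1 - 2 * η x) μ := (integrable_const 1).sub (hηint.const_mul 2)
  have hexcess : P.real {ω | (if (1 : ℝ) / 2 ≤ f (X ω) then (1 : ℝ) else 0) ≠ Y ω}
      - P.real {ω | (if (1 : ℝ) / 2 ≤ η (X ω) then (1 : ℝ) else 0) ≠ Y ω}
      ≤ ∫ x in S, |1 - 2 * η x| ∂μ := by
    rw [measureReal_plugIn_ne hX hY hY01 hηint hreg hf,
      measureReal_plugIn_ne hX hY hY01 hηint hreg hη]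
    linarith [setIntegral_sub_setIntegral_le hh hA hB]
  refine (ENNReal.sub_le_ofReal_of_toReal_sub_le (measure_ne_top _ _) (measure_ne_top _ _)
    hexcess).trans (ofReal_setIntegral_le_mul_lintegral hh.abs (fun _ => abs_nonneg _)
      (by positivity) ?_)
  filter_upwards [ae_restrict_of_ae hmargin, ae_restrict_mem (hA.symmDiff hB)] with x hx hxS
  exact abs_one_sub_two_mul_le_of_margin ht₀ hx hxS
end

section
/- Suppose the regression function η satisfies the Tsybakov noise condition with constants C₀ > 0, α ≥ 0: μ_X(0 < |η(x) − 1/2| ≤ t) ≤ C₀ t^α for all t > 0. Then for any measurable f : ℝ^d → ℝ with plug-in classifier g_f and any 1 ≤ p < ∞, there is a constant C depending only on C₀, α, p such that P(g_f(X) ≠ Y) − L* ≤ C (∫ |η − f|^p dμ_X)^{(1+α)/(p+α)}. -/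
open MeasureTheory Filter Topology
open scoped ENNReal

/-!
The error of the rule `x ↦ 𝟙{c x}` is `∫ (𝟙_c (1 - η) + 𝟙_{¬c} η) dμ_X`, so the plug-in rule loses
`|2η - 1| = 2|η - 1/2|` exactly where its decision differs from the Bayes rule, and there
`|η - 1/2| ≤ |η - f|`. For `t > 0`, bound `|η - 1/2|` by `t` on the margin set
`{0 < |η - 1/2| ≤ t}`, of measure `≤ C₀ t^α`, and by `t^(1-p) |η - f|^p` off it. The excess risk is
then at most `2 C₀ t^(1+α) + 2 t^(1-p) ∫ |η - f|^p`, and `t = (∫ |η - f|^p)^(1/(p+α))` balances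
the two terms.
-/

section LabelProbabilities

variable {Ω β : Type*} [MeasurableSpace Ω] [MeasurableSpace β] {P : Measure Ω}
  [IsFiniteMeasure P] {X : Ω → β} {Y : Ω → ℝ} {η : β → ℝ} {s : Set β}

lemma measure_preimage_inter_label_one (hY : Measurable Y)
    (hY01 : ∀ ω, Y ω = 0 ∨ Y ω = 1) (hη : Measurable η) (hη01 : ∀ x, 0 ≤ η x ∧ η x ≤ 1)
    (hint : ∀ s : Set β, MeasurableSet s → ∫ ω in X ⁻¹' s, Y ω ∂P = ∫ x in s, η x ∂(P.map X))
    (hs : MeasurableSet s) :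
    P (X ⁻¹' s ∩ {ω | Y ω = 1}) = ∫⁻ x in s, ENNReal.ofReal (η x) ∂(P.map X) := by
  have hJ : MeasurableSet {ω | Y ω = 1} := hY (measurableSet_singleton 1)
  have hY_eq : ∀ ω, Y ω = {ω | Y ω = 1}.indicator 1 ω := by
    intro ω
    rcases hY01 ω with h | h <;> simp [Set.indicator, h]
  have hη_int : Integrable η (P.map X) :=
    .of_bound hη.aestronglyMeasurable 1 (.of_forall fun x => by
      rw [Real.norm_eq_abs, abs_le]; constructor <;> linarith [hη01 x])
  have hmass : ∫ ω in X ⁻¹' s, Y ω ∂P = P.real (X ⁻¹' s ∩ {ω | Y ω = 1}) := by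
    rw [integral_congr_ae (.of_forall hY_eq), integral_indicator_one hJ,
      measureReal_restrict_apply hJ, Set.inter_comm]
  rw [← ofReal_integral_eq_lintegral_ofReal hη_int.integrableOn
      (.of_forall fun x => (hη01 x).1), ← hint s hs, hmass, ofReal_measureReal]

lemma measure_preimage_inter_label_zero (hX : Measurable X) (hY : Measurable Y)
    (hY01 : ∀ ω, Y ω = 0 ∨ Y ω = 1) (hη : Measurable η) (hη01 : ∀ x, 0 ≤ η x ∧ η x ≤ 1)
    (hint : ∀ s : Set β, MeasurableSet s → ∫ ω in X ⁻¹' s, Y ω ∂P = ∫ x in s, η x ∂(P.map X))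
    (hs : MeasurableSet s) :
    P (X ⁻¹' s ∩ {ω | Y ω = 0}) = ∫⁻ x in s, ENNReal.ofReal (1 - η x) ∂(P.map X) := by
  have hJ : MeasurableSet {ω | Y ω = 1} := hY (measurableSet_singleton 1)
  have hdiff : X ⁻¹' s \ {ω | Y ω = 1} = X ⁻¹' s ∩ {ω | Y ω = 0} := by
    ext ω
    rcases hY01 ω with h | h <;> simp [h]
  have hsplit_P := measure_inter_add_sdiff (μ := P) (X ⁻¹' s) hJ
  have hsplit_μ : ∫⁻ x in s, ENNReal.ofReal (1 - η x) ∂(P.map X)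
      + ∫⁻ x in s, ENNReal.ofReal (η x) ∂(P.map X) = P.map X s := by
    rw [← lintegral_add_right _ hη.ennreal_ofReal, ← setLIntegral_one]
    refine setLIntegral_congr_fun hs fun x _ => ?_
    rw [← ENNReal.ofReal_add (by linarith [hη01 x]) (hη01 x).1, sub_add_cancel,
      ENNReal.ofReal_one]
  have hone := measure_preimage_inter_label_one hY hY01 hη hη01 hint hs
  rw [Measure.map_apply hX hs, ← hsplit_P, hdiff, hone, add_comm] at hsplit_μ
  exact (ENNReal.add_right_inj (hone ▸ measure_ne_top P _)).1 hsplit_μ.symm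

lemma measure_ite_ne_label_eq_lintegral (hX : Measurable X) (hY : Measurable Y)
    (hY01 : ∀ ω, Y ω = 0 ∨ Y ω = 1) (hη : Measurable η) (hη01 : ∀ x, 0 ≤ η x ∧ η x ≤ 1)
    (hint : ∀ s : Set β, MeasurableSet s → ∫ ω in X ⁻¹' s, Y ω ∂P = ∫ x in s, η x ∂(P.map X))
    (c : β → Prop) [DecidablePred c] (hc : MeasurableSet {x | c x}) :
    P {ω | (if c (X ω) then (1 : ℝ) else 0) ≠ Y ω}
      = ∫⁻ x, ENNReal.ofReal (if c x then 1 - η x else η x) ∂(P.map X) := by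
  have hJ : MeasurableSet {ω | Y ω = 1} := hY (measurableSet_singleton 1)
  have herr : {ω | (if c (X ω) then (1 : ℝ) else 0) ≠ Y ω}
      = (X ⁻¹' {x | c x} ∩ {ω | Y ω = 0}) ∪ (X ⁻¹' {x | c x}ᶜ ∩ {ω | Y ω = 1}) := by
    ext ω
    rcases hY01 ω with h | h <;> by_cases hcω : c (X ω) <;> simp [h, hcω]
  rw [herr, measure_union (Disjoint.mono Set.inter_subset_left Set.inter_subset_left
      (disjoint_compl_right.preimage X)) ((hX hc.compl).inter hJ),
    measure_preimage_inter_label_zero hX hY hY01 hη hη01 hint hc,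
    measure_preimage_inter_label_one hY hY01 hη hη01 hint hc.compl,
    ← lintegral_add_compl (fun x => ENNReal.ofReal (if c x then 1 - η x else η x)) hc]
  congr 1
  · exact setLIntegral_congr_fun hc fun x hx => by rw [if_pos (show c x from hx)]
  · exact setLIntegral_congr_fun hc.compl fun x hx => by rw [if_neg (show ¬c x from hx)]

end LabelProbabilities

lemma le_rpow_one_sub_mul_rpow {t v p : ℝ} (ht : 0 < t) (htv : t ≤ v) (hp : 1 ≤ p) :
    v ≤ t ^ (1 - p) * v ^ p := by
  have hv : 0 < v := ht.trans_le htv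
  calc v = v * 1 := (mul_one v).symm
    _ ≤ v * (v / t) ^ (p - 1) := mul_le_mul_of_nonneg_left
        (Real.one_le_rpow ((one_le_div ht).2 htv) (by linarith)) hv.le
    _ = t ^ (1 - p) * v ^ p := by
        rw [Real.div_rpow hv.le ht.le, Real.rpow_sub_one hv.ne', show 1 - p = -(p - 1) by ring,
          Real.rpow_neg ht.le]
        field_simp

lemma le_ite_add_rpow {u v t p : ℝ} (hu : 0 ≤ u) (huv : u ≤ v) (ht : 0 < t) (hp : 1 ≤ p) :
    u ≤ (if 0 < u ∧ u ≤ t then t else 0) + t ^ (1 - p) * v ^ p := by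
  have htail : 0 ≤ t ^ (1 - p) * v ^ p :=
    mul_nonneg (Real.rpow_nonneg ht.le _) (Real.rpow_nonneg (hu.trans huv) _)
  split_ifs with hmargin
  · linarith [hmargin.2]
  · rcases hu.eq_or_lt with rfl | hu_pos
    · linarith
    · have htu : t < u := by
        by_contra! h
        exact hmargin ⟨hu_pos, h⟩
      linarith [le_rpow_one_sub_mul_rpow ht (htu.le.trans huv) hp]

lemma ite_half_le_ite_half_add (y z : ℝ) {t p : ℝ} (ht : 0 < t) (hp : 1 ≤ p) :
    (if 1 / 2 ≤ z then 1 - y else y) ≤ (if 1 / 2 ≤ y then 1 - y else y)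
      + 2 * ((if 0 < |y - 1 / 2| ∧ |y - 1 / 2| ≤ t then t else 0) + t ^ (1 - p) * |y - z| ^ p) := by
  have hmargin_le := fun h ↦ le_ite_add_rpow (v := |y - z|) (abs_nonneg (y - 1 / 2)) h ht hp
  have hnonneg : 0 ≤ (if 0 < |y - 1 / 2| ∧ |y - 1 / 2| ≤ t then t else 0)
      + t ^ (1 - p) * |y - z| ^ p :=
    add_nonneg (by split_ifs <;> linarith)
      (mul_nonneg (Real.rpow_nonneg ht.le _) (Real.rpow_nonneg (abs_nonneg _) _))
  by_cases hz : 1 / 2 ≤ z <;> by_cases hy : 1 / 2 ≤ y <;> simp only [hz, hy, if_true, if_false]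
  · linarith
  · have habs : |y - 1 / 2| = 1 / 2 - y := by rw [abs_of_neg (by linarith)]; ring
    have := hmargin_le (by rw [habs, abs_of_nonpos (by linarith)]; linarith)
    linarith
  · have habs : |y - 1 / 2| = y - 1 / 2 := abs_of_nonneg (by linarith)
    have := hmargin_le (by rw [habs, abs_of_nonneg (by linarith)]; linarith)
    linarith
  · linarith

lemma lintegral_plugIn_error_le {β : Type*} [MeasurableSpace β] (μ : Measure β) {η f : β → ℝ}
    (hη : Measurable η) (hf : Measurable f) {t p : ℝ} (ht : 0 < t) (hp : 1 ≤ p) :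
    ∫⁻ x, ENNReal.ofReal (if 1 / 2 ≤ f x then 1 - η x else η x) ∂μ
      ≤ ∫⁻ x, ENNReal.ofReal (if 1 / 2 ≤ η x then 1 - η x else η x) ∂μ
        + ENNReal.ofReal (2 * t) * μ {x | 0 < |η x - 1 / 2| ∧ |η x - 1 / 2| ≤ t}
        + ENNReal.ofReal (2 * t ^ (1 - p)) * ∫⁻ x, ENNReal.ofReal (|η x - f x| ^ p) ∂μ := by
  set E := {x | 0 < |η x - 1 / 2| ∧ |η x - 1 / 2| ≤ t}
  have hdist : Measurable fun x ↦ |η x - 1 / 2| := (hη.sub measurable_const).abs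
  have hE : MeasurableSet E :=
    (measurableSet_lt measurable_const hdist).inter (measurableSet_le hdist measurable_const)
  have hgap : Measurable fun x ↦ ENNReal.ofReal (|η x - f x| ^ p) :=
    ((hη.sub hf).abs.pow_const p).ennreal_ofReal
  calc ∫⁻ x, ENNReal.ofReal (if 1 / 2 ≤ f x then 1 - η x else η x) ∂μ
      ≤ ∫⁻ x, (ENNReal.ofReal (if 1 / 2 ≤ η x then 1 - η x else η x)
          + E.indicator (fun _ ↦ ENNReal.ofReal (2 * t)) x
          + ENNReal.ofReal (2 * t ^ (1 - p)) * ENNReal.ofReal (|η x - f x| ^ p)) ∂μ := by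
        refine lintegral_mono fun x ↦ ?_
        have hind : ENNReal.ofReal (2 * if x ∈ E then t else 0)
            = E.indicator (fun _ ↦ ENNReal.ofReal (2 * t)) x := by
          by_cases hx : x ∈ E <;> simp [hx]
        rw [← hind, ← ENNReal.ofReal_mul (by positivity)]
        refine (ENNReal.ofReal_le_ofReal (ite_half_le_ite_half_add (η x) (f x) ht hp)).trans ?_
        rw [mul_add, ← add_assoc, ← mul_assoc]
        exact ENNReal.ofReal_add_le.trans (by gcongr; exact ENNReal.ofReal_add_le)
    _ = _ := by
        rw [lintegral_add_right _ (hgap.const_mul _), lintegral_add_right _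
          (measurable_const.indicator hE), lintegral_indicator_const hE,
          lintegral_const_mul _ hgap]

lemma le_mul_rpow_of_forall_pos_le {D B : ℝ≥0∞} {a b α p : ℝ} (ha : 0 ≤ a) (hb : 0 ≤ b)
    (hα : 0 < 1 + α) (hpα : 0 < p + α)
    (h : ∀ t : ℝ, 0 < t →
      D ≤ ENNReal.ofReal (a * t ^ (1 + α)) + ENNReal.ofReal (b * t ^ (1 - p)) * B) :
    D ≤ ENNReal.ofReal (a + b) * B ^ ((1 + α) / (p + α)) := by
  have he : 0 < (1 + α) / (p + α) := div_pos hα hpα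
  rcases eq_or_ne B ⊤ with rfl | hB_top
  · rw [ENNReal.top_rpow_of_pos he]
    rcases (add_nonneg ha hb).eq_or_lt with hab | hab
    · have := h 1 one_pos
      rw [show a = 0 by linarith, show b = 0 by linarith] at this
      simp only [zero_mul, ENNReal.ofReal_zero, add_zero, nonpos_iff_eq_zero] at this
      simp [this]
    · simp [ENNReal.mul_top, hab]
  rcases eq_or_ne B 0 with rfl | hB_zero
  · rw [ENNReal.zero_rpow_of_pos he, mul_zero]
    have hlim : Tendsto (fun t : ℝ ↦ ENNReal.ofReal (a * t ^ (1 + α))) (𝓝[>] 0) (𝓝 0) := by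
      have hcont : ContinuousAt (fun t : ℝ ↦ ENNReal.ofReal (a * t ^ (1 + α))) 0 :=
        ENNReal.continuous_ofReal.continuousAt.comp
          ((Real.continuousAt_rpow_const 0 (1 + α) (Or.inr hα.le)).const_mul a)
      simpa [Real.zero_rpow hα.ne'] using hcont.tendsto.mono_left nhdsWithin_le_nhds
    exact ge_of_tendsto hlim (eventually_mem_nhdsWithin.mono fun t ht ↦ by simpa using h t ht)
  set A := B.toReal
  have hA : 0 < A := ENNReal.toReal_pos hB_zero hB_top
  set t := A ^ (1 / (p + α))
  have ht_pow : t ^ (1 + α) = A ^ ((1 + α) / (p + α)) := by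
    rw [← Real.rpow_mul hA.le]; congr 1; field_simp
  have ht_tail : t ^ (1 - p) * A = A ^ ((1 + α) / (p + α)) := by
    rw [← Real.rpow_mul hA.le, ← Real.rpow_add_one hA.ne']; congr 1; field_simp; ring
  calc D ≤ ENNReal.ofReal (a * t ^ (1 + α)) + ENNReal.ofReal (b * t ^ (1 - p)) * B :=
        h t (Real.rpow_pos_of_pos hA _)
    _ = ENNReal.ofReal (a + b) * B ^ ((1 + α) / (p + α)) := by
        rw [← ENNReal.ofReal_toReal hB_top, ← ENNReal.ofReal_mul (by positivity), mul_assoc,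
          ht_tail, ht_pow, ENNReal.ofReal_rpow_of_pos hA, ← ENNReal.ofReal_mul (by positivity),
          ← ENNReal.ofReal_add (by positivity) (by positivity), add_mul]

/-- Comparison inequality under the Tsybakov noise condition: for `C₀ > 0`, `α ≥ 0` and
`1 ≤ p < ∞` there is a constant `C > 0`, depending only on `C₀, α, p`, such that for every
distribution whose regression function `η` satisfies
`μ_X(0 < |η − 1/2| ≤ t) ≤ C₀ t^α` and every measurable `f`, the excess risk of the
plug-in classifier `g_f(x) = 𝟙{f x ≥ 1/2}` is at most
`C (∫ |η − f|^p dμ_X)^{(1+α)/(p+α)}`. -/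
theorem stmt_12 (d : ℕ) (C₀ α p : ℝ) (hC₀ : 0 < C₀) (hα : 0 ≤ α) (hp : 1 ≤ p) :
    ∃ C : ℝ, 0 < C ∧
      ∀ (Ω : Type) (_ : MeasurableSpace Ω) (P : Measure Ω), IsProbabilityMeasure P →
      ∀ (X : Ω → (Fin d → ℝ)) (Y : Ω → ℝ), Measurable X → Measurable Y →
      (∀ ω, Y ω = 0 ∨ Y ω = 1) →
      ∀ η : (Fin d → ℝ) → ℝ, Measurable η → (∀ x, 0 ≤ η x ∧ η x ≤ 1) →
      (∀ s : Set (Fin d → ℝ), MeasurableSet s →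
        ∫ ω in X ⁻¹' s, Y ω ∂P = ∫ x in s, η x ∂(P.map X)) →
      (∀ t : ℝ, 0 < t →
        (P.map X) {x | 0 < |η x - 1 / 2| ∧ |η x - 1 / 2| ≤ t}
          ≤ ENNReal.ofReal (C₀ * t ^ α)) →
      ∀ f : (Fin d → ℝ) → ℝ, Measurable f →
        P {ω | (if (1 : ℝ) / 2 ≤ f (X ω) then (1 : ℝ) else 0) ≠ Y ω}
            - P {ω | (if (1 : ℝ) / 2 ≤ η (X ω) then (1 : ℝ) else 0) ≠ Y ω}
          ≤ ENNReal.ofReal C *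
              (∫⁻ x, ENNReal.ofReal (|η x - f x| ^ p) ∂(P.map X)) ^ ((1 + α) / (p + α)) := by
  refine ⟨2 * C₀ + 2, by positivity, ?_⟩
  intro Ω _ P _ X Y hX hY hY01 η hη hη01 hint hTsybakov f hf
  rw [measure_ite_ne_label_eq_lintegral hX hY hY01 hη hη01 hint _
      (measurableSet_le measurable_const hf),
    measure_ite_ne_label_eq_lintegral hX hY hY01 hη hη01 hint _
      (measurableSet_le measurable_const hη)]
  refine le_mul_rpow_of_forall_pos_le (by positivity) zero_le_two (by linarith) (by linarith)
    fun t ht ↦ tsub_le_iff_left.2 ?_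
  have hmargin : ENNReal.ofReal (2 * t) * P.map X {x | 0 < |η x - 1 / 2| ∧ |η x - 1 / 2| ≤ t}
      ≤ ENNReal.ofReal (2 * C₀ * t ^ (1 + α)) :=
    calc _ ≤ ENNReal.ofReal (2 * t) * ENNReal.ofReal (C₀ * t ^ α) := by gcongr; exact hTsybakov t ht
      _ = _ := by
        rw [← ENNReal.ofReal_mul (by positivity), Real.rpow_add ht, Real.rpow_one]
        congr 1; ring
  calc _ ≤ _ := lintegral_plugIn_error_le _ hη hf ht hp
    _ ≤ _ := by rw [add_assoc]; gcongr
end
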